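/- The identity C(d,p) = 2^(d/2-1) with integers d ≥ 4 and 1 ≤ p < d/2 has a unique solution, namely (d,p) = (8,1). -/

import Mathlib

/-!
Squaring turns the equation into `C(d, p) ^ 2 = 2 ^ (d - 2)`, so `d = 2k + 2` and
`C(d, p) = 2 ^ k`. Since every prime power dividing `C(d, p)` is at most `d` (Kummer),
`2 ^ k ≤ 2k + 2`, which forces `k ≤ 3`; the few remaining cases are checked directly.
-/

lemma natCast_eq_two_rpow_iff {m n : ℕ} (hn : 2 ≤ n) :
    (m : ℝ) = 2 ^ ((n : ℝ) / 2 - 1) ↔ m ^ 2 = 2 ^ (n - 2) := by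
  have hsq : ((2 : ℝ) ^ ((n : ℝ) / 2 - 1)) ^ 2 = 2 ^ (n - 2) := by
    rw [← Real.rpow_natCast _ 2, ← Real.rpow_mul zero_le_two, ← Real.rpow_natCast,
      Nat.cast_sub hn]
    ring_nf
  rw [← sq_eq_sq₀ m.cast_nonneg (by positivity), hsq]
  exact_mod_cast Iff.rfl

lemma Nat.Prime.eq_pow_of_sq_eq_pow {p m j : ℕ} (hp : p.Prime) (h : m ^ 2 = p ^ j) :
    ∃ k, m = p ^ k ∧ j = 2 * k := by
  obtain ⟨k, -, rfl⟩ := (Nat.dvd_prime_pow hp).1 (Dvd.intro_left _ (sq m ▸ h))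
  refine ⟨k, rfl, Nat.pow_right_injective hp.two_le ?_⟩
  simpa [← pow_mul, mul_comm] using h.symm

lemma Nat.Prime.pow_le_of_choose_eq_pow {p n k j : ℕ} (hp : p.Prime) (hn : 0 < n)
    (h : n.choose k = p ^ j) : p ^ j ≤ n := by
  simpa [h, hp.factorization_pow] using Nat.pow_factorization_choose_le (p := p) (k := k) hn

lemma le_three_of_two_pow_le {k : ℕ} (h : 2 ^ k ≤ 2 * k + 2) : k ≤ 3 := by
  by_contra! hk
  obtain ⟨i, rfl⟩ := Nat.exists_eq_add_of_le' hk
  have : i < 2 ^ i := Nat.lt_two_pow_self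
  rw [pow_add] at h
  omega

lemma choose_two_mul_add_two_eq_two_pow_iff {k p : ℕ} (hp : p ≤ k) :
    (2 * k + 2).choose p = 2 ^ k ↔ (k = 0 ∧ p = 0) ∨ (k = 3 ∧ p = 1) := by
  constructor
  · intro h
    have hk : k ≤ 3 :=
      le_three_of_two_pow_le (Nat.prime_two.pow_le_of_choose_eq_pow (by omega) h)
    interval_cases k <;> interval_cases p <;> revert h <;> decide
  · rintro (⟨rfl, rfl⟩ | ⟨rfl, rfl⟩) <;> rfl

theorem choose_eq_two_pow_unique_general (d p : ℕ) (hp : 1 ≤ p) (hpd : 2 * p < d) :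
    ((d.choose p : ℝ) = (2 : ℝ) ^ ((d : ℝ) / 2 - 1)) ↔ (d = 8 ∧ p = 1) := by
  rw [natCast_eq_two_rpow_iff (by omega)]
  constructor
  · intro h
    obtain ⟨k, hck, hk⟩ := Nat.prime_two.eq_pow_of_sq_eq_pow h
    obtain rfl : d = 2 * k + 2 := by omega
    rcases (choose_two_mul_add_two_eq_two_pow_iff (by omega)).1 hck with
      ⟨rfl, rfl⟩ | ⟨rfl, rfl⟩
    · omega
    · exact ⟨rfl, rfl⟩
  · rintro ⟨rfl, rfl⟩
    rfl

theorem choose_eq_two_pow_unique (d p : ℕ) (hd : 4 ≤ d) (hp : 1 ≤ p) (hpd : 2 * p < d) :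
    ((d.choose p : ℝ) = (2 : ℝ) ^ ((d : ℝ) / 2 - 1)) ↔ (d = 8 ∧ p = 1) :=
  choose_eq_two_pow_unique_general d p hp hpd
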